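/- The first-return map f on the Poincaré section Σ of the single-cow model has no fixed point w = (x, y; θ) ∈ Σ with (x, y) ≠ (1, 1). Equivalently: for every y ∈ [δ, 1) one has f(1, y; E) ≠ (1, y; E), and for every x ∈ [δ, 1) one has f(x, 1; R) ≠ (x, 1; R). (Hence the only possible fixed point of f on Σ is the corner point (1, 1; E).) -/
import Mathlib


/-- The discrete state of a cow: eating, resting (lying down), or standing. -/
inductive CowState
  | E | R | S
deriving DecidableEq

open CowState

/-- The Poincaré map `g` of the single-cow model, acting on points
`(x, y; θ)` of the boundary of the square `[δ,1]²` together with a state label.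
Powers are real powers (`Real.rpow`). -/
noncomputable def g (α1 α2 β1 β2 δ : ℝ) : ℝ × ℝ × CowState → ℝ × ℝ × CowState
  | (_x, y, .E) =>
      if δ ^ (β1 / α2) ≤ y then (y ^ (α2 / β1), 1, R)
      else (δ, δ ^ (-(β1 / α2)) * y, S)
  | (x, _y, .R) =>
      if δ ^ (α1 / β2) ≤ x then (1, x ^ (β2 / α1), E)
      else (δ ^ (-(α1 / β2)) * x, δ, S)
  | (x, y, .S) =>
      if x = δ then
        -- on the edge `x = δ`
        (if y ≤ δ ^ (β1 / α1) then (1, δ ^ (-(β1 / α1)) * y, E)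
         else (y ^ (-(α1 / β1)) * δ, 1, R))
      else
        -- on the edge `y = δ`
        (if δ ^ (α1 / β1) ≤ x then (1, x ^ (-(β1 / α1)) * δ, E)
         else (δ ^ (-(α1 / β1)) * x, 1, R))

/-- The Poincaré section `Σ = {(1,y;E) : δ ≤ y ≤ 1} ∪ {(x,1;R) : δ ≤ x < 1}`. -/
def inSigma (δ : ℝ) : ℝ × ℝ × CowState → Prop
  | (x, y, .E) => x = 1 ∧ δ ≤ y ∧ y ≤ 1
  | (x, y, .R) => δ ≤ x ∧ x < 1 ∧ y = 1
  | (_, _, .S) => False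

/-- The first-return map `f` on the Poincaré section `Σ`:
`f(w) = g(w)` if `g(w) ∈ Σ`, and `f(w) = g(g(w))` otherwise. -/
noncomputable def f (α1 α2 β1 β2 δ : ℝ) (w : ℝ × ℝ × CowState) : ℝ × ℝ × CowState := by
  classical
  exact if inSigma δ (g α1 α2 β1 β2 δ w) then g α1 α2 β1 β2 δ w
        else g α1 α2 β1 β2 δ (g α1 α2 β1 β2 δ w)

lemma aux_ne (δ t a b : ℝ) (hδ0 : 0 < δ) (hδ1 : δ < 1) (ht : 0 < t)
    (ha : a < 0) (hb : b < 0) : δ ^ a * (δ ^ b * t) ≠ t := by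
  intro h
  rw [← mul_assoc, ← Real.rpow_add hδ0] at h
  have h1 : δ ^ (a + b) = 1 := mul_right_cancel₀ ht.ne' (h.trans (one_mul t).symm)
  have h2 : 1 < δ ^ (a + b) :=
    (Real.one_lt_rpow_iff_of_pos hδ0).2 (Or.inr ⟨hδ1, by linarith⟩)
  linarith [h1 ▸ h2]

/-- The first-return map `f` on the Poincaré section `Σ` of the
single-cow model has no fixed point other than possibly the corner `(1,1;E)`:
for every `y ∈ [δ,1)`, `f(1,y;E) ≠ (1,y;E)`, and for every `x ∈ [δ,1)`,
`f(x,1;R) ≠ (x,1;R)`. -/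
theorem no_fixed_point_off_corner
    (α1 α2 β1 β2 δ : ℝ)
    (hα1 : 0 < α1) (hα2 : 0 < α2) (hβ1 : 0 < β1) (hβ2 : 0 < β2)
    (hδ0 : 0 < δ) (hδ1 : δ < 1) :
    (∀ y : ℝ, δ ≤ y → y < 1 →
      f α1 α2 β1 β2 δ (1, y, E) ≠ (1, y, E)) ∧
    (∀ x : ℝ, δ ≤ x → x < 1 →
      f α1 α2 β1 β2 δ (x, 1, R) ≠ (x, 1, R)) := by
  have ha1 : -(β1 / α1) < 0 := neg_lt_zero.2 (div_pos hβ1 hα1)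
  have ha2 : -(β1 / α2) < 0 := neg_lt_zero.2 (div_pos hβ1 hα2)
  have hb1 : -(α1 / β1) < 0 := neg_lt_zero.2 (div_pos hα1 hβ1)
  have hb2 : -(α1 / β2) < 0 := neg_lt_zero.2 (div_pos hα1 hβ2)
  constructor
  · intro y hy hy1
    have hy0 : 0 < y := lt_of_lt_of_le hδ0 hy
    by_cases hcase : δ ^ (β1 / α2) ≤ y
    · have hgw : g α1 α2 β1 β2 δ (1, y, E) = (y ^ (α2 / β1), 1, R) := by
        simp [g, hcase]
      have hid : (δ ^ (β1 / α2)) ^ (α2 / β1) = δ := by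
        rw [← Real.rpow_mul hδ0.le,
          show β1 / α2 * (α2 / β1) = 1 by field_simp, Real.rpow_one]
      have h1 : δ ≤ y ^ (α2 / β1) := by
        calc δ = (δ ^ (β1 / α2)) ^ (α2 / β1) := hid.symm
        _ ≤ y ^ (α2 / β1) :=
          Real.rpow_le_rpow (Real.rpow_nonneg hδ0.le _) hcase
            (le_of_lt (div_pos hα2 hβ1))
      have h2 : y ^ (α2 / β1) < 1 :=
        Real.rpow_lt_one hy0.le hy1 (div_pos hα2 hβ1)
      have hsig : inSigma δ (g α1 α2 β1 β2 δ (1, y, E)) := by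
        rw [hgw]; exact ⟨h1, h2, rfl⟩
      rw [f, if_pos hsig, hgw]
      simp
    · have hgw : g α1 α2 β1 β2 δ (1, y, E) = (δ, δ ^ (-(β1 / α2)) * y, S) := by
        simp [g, hcase]
      have hsig : ¬ inSigma δ (g α1 α2 β1 β2 δ (1, y, E)) := by
        rw [hgw]; simp [inSigma]
      rw [f, if_neg hsig, hgw]
      by_cases hc2 : δ ^ (-(β1 / α2)) * y ≤ δ ^ (β1 / α1)
      · simp only [g, if_pos rfl, if_pos hc2]
        intro h
        have h1 : δ ^ (-(β1 / α1)) * (δ ^ (-(β1 / α2)) * y) = y := by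
          have := congrArg (fun p => p.2.1) h; simpa using this
        exact aux_ne δ y _ _ hδ0 hδ1 hy0 ha1 ha2 h1
      · simp only [g, if_pos rfl, if_neg hc2]
        simp
  · intro x hx hx1
    have hx0 : 0 < x := lt_of_lt_of_le hδ0 hx
    by_cases hcase : δ ^ (α1 / β2) ≤ x
    · have hgw : g α1 α2 β1 β2 δ (x, 1, R) = (1, x ^ (β2 / α1), E) := by
        simp [g, hcase]
      have hid : (δ ^ (α1 / β2)) ^ (β2 / α1) = δ := by
        rw [← Real.rpow_mul hδ0.le,
          show α1 / β2 * (β2 / α1) = 1 by field_simp, Real.rpow_one]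
      have h1 : δ ≤ x ^ (β2 / α1) := by
        calc δ = (δ ^ (α1 / β2)) ^ (β2 / α1) := hid.symm
        _ ≤ x ^ (β2 / α1) :=
          Real.rpow_le_rpow (Real.rpow_nonneg hδ0.le _) hcase
            (le_of_lt (div_pos hβ2 hα1))
      have h2 : x ^ (β2 / α1) ≤ 1 :=
        (Real.rpow_lt_one hx0.le hx1 (div_pos hβ2 hα1)).le
      have hsig : inSigma δ (g α1 α2 β1 β2 δ (x, 1, R)) := by
        rw [hgw]; exact ⟨rfl, h1, h2⟩
      rw [f, if_pos hsig, hgw]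
      simp
    · have hgw : g α1 α2 β1 β2 δ (x, 1, R) = (δ ^ (-(α1 / β2)) * x, δ, S) := by
        simp [g, hcase]
      have hsig : ¬ inSigma δ (g α1 α2 β1 β2 δ (x, 1, R)) := by
        rw [hgw]; simp [inSigma]
      rw [f, if_neg hsig, hgw]
      by_cases hxd : δ ^ (-(α1 / β2)) * x = δ
      · have hxval : x = δ ^ (α1 / β2) * δ := by
          have h := congrArg (fun t => δ ^ (α1 / β2) * t) hxd
          simp only [← mul_assoc, ← Real.rpow_add hδ0] at h
          simpa using h
        rw [show g α1 α2 β1 β2 δ (δ ^ (-(α1 / β2)) * x, δ, S)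
            = g α1 α2 β1 β2 δ (δ, δ, S) by rw [hxd]]
        by_cases hc2 : δ ≤ δ ^ (β1 / α1)
        · simp only [g, if_pos rfl, if_pos hc2]; simp
        · simp only [g, if_pos rfl, if_neg hc2]
          intro h
          have h1 : δ ^ (-(α1 / β1)) * δ = x := by
            have := congrArg (fun p => p.1) h; simpa using this
          rw [hxval, ← Real.rpow_add_one hδ0.ne', ← Real.rpow_add_one hδ0.ne'] at h1
          have hlt : δ ^ (α1 / β2 + 1) < δ ^ (-(α1 / β1) + 1) :=
            Real.rpow_lt_rpow_of_exponent_gt hδ0 hδ1 (by linarith)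
          rw [h1] at hlt
          exact lt_irrefl _ hlt
      · simp only [g, if_neg hxd]
        by_cases hc2 : δ ^ (α1 / β1) ≤ δ ^ (-(α1 / β2)) * x
        · rw [if_pos hc2]; simp
        · rw [if_neg hc2]
          intro h
          have h1 : δ ^ (-(α1 / β1)) * (δ ^ (-(α1 / β2)) * x) = x := by
            have := congrArg (fun p => p.1) h; simpa using this
          exact aux_ne δ x _ _ hδ0 hδ1 hx0 hb1 hb2 h1
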